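/- Let X₀ ∈ ℝ^{n×n} have pairwise distinct singular values and let Y₀ = (V₀, U₀, Λ₀) be any SVD of X₀ (X₀ = V₀ diag(Λ₀) U₀^*, V₀, U₀ orthogonal). Define ψ(X, (V,U,Λ)) = (X − V diag(Λ) U^*, V^*V − Id, U^*U − Id). Then the partial differential ∂₂ψ(X₀, Y₀) is invertible on the subspace ℝ^{n×n} × {0} × {0}, and for z = (z₁, 0, 0) its inverse is (∂₂ψ(X₀,Y₀))^{-1}[z] = ( V₀ ι_V, U₀ ι_U, −diag(V₀^* z₁ U₀) ), where ι_V, ι_U are the unique antisymmetric matrices with, for i ≠ j, ((ι_V)_{i,j}, (ι_U)_{i,j}) the solution of the system [[(Λ₀)_j, −(Λ₀)_i], [−(Λ₀)_i, (Λ₀)_j]] ((ι_V)_{i,j}, (ι_U)_{i,j})^T = (−(z̄₁)_{i,j}, −(z̄₁)_{j,i})^T, with z̄₁ = V₀^* z₁ U₀. -/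

import Mathlib

/-!
In the coordinates `ζ = (V₀ α, U₀ β, μ)` the differential reads
`(-V₀ (α Λ + diag μ + Λ βᵀ) U₀ᵀ, αᵀ + α, βᵀ + β)`. Its last two components vanish exactly when
`α` and `β` are antisymmetric, and then the first one splits into the diagonal, which determines
`μ`, and for each pair `i ≠ j` a 2×2 system in `(α i j, β i j)` with determinant `Λ_j² - Λ_i²`.
Distinct nonnegative singular values make all these determinants nonzero: the kernel is trivial,
and Cramer's rule produces the antisymmetric `ι_V, ι_U`.
-/

open Matrix

attribute [local instance] Matrix.normedAddCommGroup Matrix.normedSpace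

/-- The map `ψ(X, (V, U, Λ)) = (X − V diag(Λ) Uᵀ, VᵀV − Id, UᵀU − Id)` whose zeros
encode SVDs of `X`. -/
noncomputable def psiSVD {n : ℕ} (X : Matrix (Fin n) (Fin n) ℝ)
    (Y : Matrix (Fin n) (Fin n) ℝ × Matrix (Fin n) (Fin n) ℝ × (Fin n → ℝ)) :
    Matrix (Fin n) (Fin n) ℝ × Matrix (Fin n) (Fin n) ℝ × Matrix (Fin n) (Fin n) ℝ :=
  (X - Y.1 * Matrix.diagonal Y.2.2 * Y.2.1ᵀ, Y.1ᵀ * Y.1 - 1, Y.2.1ᵀ * Y.2.1 - 1)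

section Calculus

variable {E : Type*} [NormedAddCommGroup E] [NormedSpace ℝ E] {l m p : Type*}
  [Fintype l] [Fintype m] [Fintype p] {x : E}

theorem HasFDerivAt.matrix_mul {f : E → Matrix l m ℝ} {g : E → Matrix m p ℝ}
    {f' : E →L[ℝ] Matrix l m ℝ} {g' : E →L[ℝ] Matrix m p ℝ}
    (hf : HasFDerivAt f f' x) (hg : HasFDerivAt g g' x) :
    HasFDerivAt (fun y => f y * g y)
      ((mulLeftLinearMap p ℝ (f x)).toContinuousLinearMap ∘L g'
        + (mulRightLinearMap l ℝ (g x)).toContinuousLinearMap ∘L f') x := by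
  convert (mulLinearMap (l := l) (m := m) (n := p) (A := ℝ) ℝ).toContinuousBilinearMap
    |>.hasFDerivAt_of_bilinear hf hg using 1 <;> rfl

theorem HasFDerivAt.matrix_transpose {f : E → Matrix m p ℝ} {f' : E →L[ℝ] Matrix m p ℝ}
    (hf : HasFDerivAt f f' x) :
    HasFDerivAt (fun y => (f y)ᵀ)
      ((transposeLinearEquiv m p ℝ ℝ).toContinuousLinearEquiv.toContinuousLinearMap.comp f') x :=
  (transposeLinearEquiv m p ℝ ℝ).toContinuousLinearEquiv.hasFDerivAt.comp x hf

theorem HasFDerivAt.matrix_diagonal [DecidableEq m] {f : E → m → ℝ} {f' : E →L[ℝ] m → ℝ}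
    (hf : HasFDerivAt f f' x) :
    HasFDerivAt (fun y => diagonal (f y))
      ((diagonalLinearMap m ℝ ℝ).toContinuousLinearMap.comp f') x :=
  (diagonalLinearMap m ℝ ℝ).toContinuousLinearMap.hasFDerivAt.comp x hf

end Calculus

theorem fderiv_psiSVD_apply {n : ℕ} (X V U : Matrix (Fin n) (Fin n) ℝ) (Λ : Fin n → ℝ)
    (A B : Matrix (Fin n) (Fin n) ℝ) (μ : Fin n → ℝ) :
    fderiv ℝ (psiSVD X) (V, U, Λ) (A, B, μ) =
      (-(A * diagonal Λ * Uᵀ + V * diagonal μ * Uᵀ + V * diagonal Λ * Bᵀ),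
        Aᵀ * V + Vᵀ * A, Bᵀ * U + Uᵀ * B) := by
  let Y : Matrix (Fin n) (Fin n) ℝ × Matrix (Fin n) (Fin n) ℝ × (Fin n → ℝ) := (V, U, Λ)
  have hV := hasFDerivAt_fst (𝕜 := ℝ) (p := Y)
  have hU := (hasFDerivAt_snd (𝕜 := ℝ) (p := Y)).fst
  have hΛ := (hasFDerivAt_snd (𝕜 := ℝ) (p := Y)).snd
  have hψ : HasFDerivAt (psiSVD X) _ Y :=
    ((hasFDerivAt_const X Y).sub
      ((hV.matrix_mul hΛ.matrix_diagonal).matrix_mul hU.matrix_transpose)).prodMk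
      (((hV.matrix_transpose.matrix_mul hV).sub_const 1).prodMk
        ((hU.matrix_transpose.matrix_mul hU).sub_const 1))
  rw [hψ.fderiv]
  -- `simp` does not see through the sup-norm instance on matrices; the chain-rule derivative
  -- unfolds definitionally instead.
  change (0 - (V * diagonal Λ * Bᵀ + (V * diagonal μ + A * diagonal Λ) * Uᵀ),
    Vᵀ * A + Aᵀ * V, Uᵀ * B + Bᵀ * U) = _
  exact Prod.ext (by noncomm_ring) (Prod.ext (add_comm _ _) (add_comm _ _))

theorem fderiv_psiSVD_apply_mul {n : ℕ} (X : Matrix (Fin n) (Fin n) ℝ)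
    {V U : Matrix (Fin n) (Fin n) ℝ} (hV : Vᵀ * V = 1) (hU : Uᵀ * U = 1) (Λ : Fin n → ℝ)
    (α β : Matrix (Fin n) (Fin n) ℝ) (μ : Fin n → ℝ) :
    fderiv ℝ (psiSVD X) (V, U, Λ) (V * α, U * β, μ) =
      (-(V * (α * diagonal Λ + diagonal μ + diagonal Λ * βᵀ) * Uᵀ), αᵀ + α, βᵀ + β) := by
  rw [fderiv_psiSVD_apply, transpose_mul, transpose_mul, Matrix.mul_assoc αᵀ, Matrix.mul_assoc βᵀ,
    hV, hU, ← Matrix.mul_assoc Vᵀ, ← Matrix.mul_assoc Uᵀ, hV, hU]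
  simp only [Matrix.one_mul, Matrix.mul_one, Prod.mk.injEq, and_true]
  noncomm_ring

theorem Matrix.apply_swap_eq_neg_of_transpose_eq_neg {ι R : Type*} [Neg R] {A : Matrix ι ι R}
    (hA : Aᵀ = -A) (i j : ι) : A j i = -A i j := by
  simpa using congrFun (congrFun hA i) j

theorem Matrix.apply_self_eq_zero_of_transpose_eq_neg {ι R : Type*} [AddGroup R]
    [IsAddTorsionFree R] {A : Matrix ι ι R} (hA : Aᵀ = -A) (i : ι) : A i i = 0 :=
  self_eq_neg.mp (apply_swap_eq_neg_of_transpose_eq_neg hA i i)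

section SkewSystem

variable {𝕜 ι : Type*} [Field 𝕜] [DecidableEq ι]

theorem eq_zero_of_sq_ne_sq {a b x y : 𝕜} (hab : a ^ 2 ≠ b ^ 2)
    (h₁ : b * x - a * y = 0) (h₂ : -a * x + b * y = 0) : x = 0 ∧ y = 0 := by
  have hdet : b ^ 2 - a ^ 2 ≠ 0 := sub_ne_zero.mpr hab.symm
  constructor
  · refine (mul_eq_zero.mp ?_).resolve_left hdet
    linear_combination b * h₁ + a * h₂
  · refine (mul_eq_zero.mp ?_).resolve_left hdet
    linear_combination a * h₁ + b * h₂

theorem exists_skew_solution_of_sq_ne_sq {Λ : ι → 𝕜} (hΛ : ∀ i j, i ≠ j → Λ i ^ 2 ≠ Λ j ^ 2)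
    (z : Matrix ι ι 𝕜) :
    ∃ ιV ιU : Matrix ι ι 𝕜, ιVᵀ = -ιV ∧ ιUᵀ = -ιU ∧ ∀ i j, i ≠ j →
      Λ j * ιV i j - Λ i * ιU i j = -z i j ∧ -Λ i * ιV i j + Λ j * ιU i j = -z j i := by
  have hdet : ∀ i j, i ≠ j → Λ j ^ 2 - Λ i ^ 2 ≠ 0 := fun i j hij =>
    sub_ne_zero.mpr (hΛ i j hij).symm
  refine ⟨of fun i j => if i = j then 0 else -(Λ j * z i j + Λ i * z j i) / (Λ j ^ 2 - Λ i ^ 2),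
    of fun i j => if i = j then 0 else -(Λ i * z i j + Λ j * z j i) / (Λ j ^ 2 - Λ i ^ 2),
    ?_, ?_, fun i j hij => ?system⟩
  case system =>
    simp only [of_apply, if_neg hij]
    constructor <;> field_simp [hdet i j hij] <;> ring
  all_goals
    ext i j
    rcases eq_or_ne i j with rfl | hij
    · simp
    · simp only [transpose_apply, Matrix.neg_apply, of_apply, if_neg hij, if_neg hij.symm]
      field_simp [hdet i j hij, hdet j i hij.symm]
      ring

theorem eq_zero_of_skew_mul_diagonal_add_eq_zero [Fintype ι] [CharZero 𝕜] {Λ μ : ι → 𝕜}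
    (hΛ : ∀ i j, i ≠ j → Λ i ^ 2 ≠ Λ j ^ 2) {α β : Matrix ι ι 𝕜} (hα : αᵀ = -α) (hβ : βᵀ = -β)
    (h : α * diagonal Λ + diagonal μ + diagonal Λ * βᵀ = 0) : α = 0 ∧ β = 0 ∧ μ = 0 := by
  have hentry : ∀ i j, α i j * Λ j + diagonal μ i j - Λ i * β i j = 0 := fun i j => by
    simpa [mul_diagonal, diagonal_mul, hβ, sub_eq_add_neg] using congrFun (congrFun h i) j
  have hoff : ∀ i j, i ≠ j → α i j = 0 ∧ β i j = 0 := fun i j hij => by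
    have h₁ := hentry i j
    have h₂ := hentry j i
    rw [diagonal_apply_ne _ hij] at h₁
    rw [diagonal_apply_ne _ hij.symm, apply_swap_eq_neg_of_transpose_eq_neg hα,
      apply_swap_eq_neg_of_transpose_eq_neg hβ] at h₂
    exact eq_zero_of_sq_ne_sq (hΛ i j hij) (by linear_combination h₁) (by linear_combination h₂)
  have hdiag := apply_self_eq_zero_of_transpose_eq_neg hα
  have hdiag' := apply_self_eq_zero_of_transpose_eq_neg hβ
  refine ⟨?_, ?_, funext fun i => by simpa [hdiag, hdiag'] using hentry i i⟩ <;> ext i j <;>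
    rcases eq_or_ne i j with rfl | hij
  exacts [hdiag i, (hoff i j hij).1, hdiag' i, (hoff i j hij).2]

end SkewSystem

theorem fderiv_psiSVD_injective {n : ℕ} (X : Matrix (Fin n) (Fin n) ℝ)
    {V U : Matrix (Fin n) (Fin n) ℝ} (hV : Vᵀ * V = 1) (hU : Uᵀ * U = 1) {Λ : Fin n → ℝ}
    (hΛ : ∀ i j, i ≠ j → Λ i ^ 2 ≠ Λ j ^ 2) :
    Function.Injective (fderiv ℝ (psiSVD X) (V, U, Λ)) := by
  refine (injective_iff_map_eq_zero _).mpr fun ⟨A, B, μ⟩ h => ?_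
  obtain ⟨α, rfl⟩ : ∃ α, A = V * α :=
    ⟨Vᵀ * A, by rw [← Matrix.mul_assoc, mul_eq_one_comm.mp hV, Matrix.one_mul]⟩
  obtain ⟨β, rfl⟩ : ∃ β, B = U * β :=
    ⟨Uᵀ * B, by rw [← Matrix.mul_assoc, mul_eq_one_comm.mp hU, Matrix.one_mul]⟩
  rw [fderiv_psiSVD_apply_mul X hV hU, Prod.mk_eq_zero, Prod.mk_eq_zero, neg_eq_zero] at h
  obtain ⟨hK, hα, hβ⟩ := h
  replace hK := congrArg (fun M => Vᵀ * M * U) hK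
  simp only [← Matrix.mul_assoc, hV, Matrix.one_mul] at hK
  simp only [Matrix.mul_assoc, hU, Matrix.mul_one, Matrix.mul_zero, Matrix.zero_mul] at hK
  obtain ⟨rfl, rfl, rfl⟩ := eq_zero_of_skew_mul_diagonal_add_eq_zero hΛ
    (eq_neg_of_add_eq_zero_left hα) (eq_neg_of_add_eq_zero_left hβ) hK
  simp

theorem fderiv_psiSVD_apply_of_skew {n : ℕ} (X : Matrix (Fin n) (Fin n) ℝ)
    {V U : Matrix (Fin n) (Fin n) ℝ} (hV : Vᵀ * V = 1) (hU : Uᵀ * U = 1) (Λ : Fin n → ℝ)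
    (z₁ ιV ιU : Matrix (Fin n) (Fin n) ℝ) (hιV : ιVᵀ = -ιV) (hιU : ιUᵀ = -ιU)
    (hsys : ∀ i j, i ≠ j → Λ j * ιV i j - Λ i * ιU i j = -((Vᵀ * z₁ * U) i j)) :
    fderiv ℝ (psiSVD X) (V, U, Λ) (V * ιV, U * ιU, fun i => -((Vᵀ * z₁ * U) i i)) =
      (z₁, 0, 0) := by
  rw [fderiv_psiSVD_apply_mul X hV hU, hιV, hιU, neg_add_cancel, neg_add_cancel]
  have hK : ιV * diagonal Λ + diagonal (fun i => -((Vᵀ * z₁ * U) i i)) + diagonal Λ * -ιU =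
      -(Vᵀ * z₁ * U) := by
    ext i j
    rcases eq_or_ne i j with rfl | hij
    · simp [apply_self_eq_zero_of_transpose_eq_neg hιV, apply_self_eq_zero_of_transpose_eq_neg hιU]
    · simp only [Matrix.add_apply, mul_diagonal, diagonal_mul, diagonal_apply_ne _ hij,
        Matrix.neg_apply]
      linear_combination hsys i j hij
  rw [hK, Matrix.mul_neg, Matrix.neg_mul, neg_neg, ← Matrix.mul_assoc, ← Matrix.mul_assoc,
    mul_eq_one_comm.mp hV, Matrix.one_mul, Matrix.mul_assoc, mul_eq_one_comm.mp hU, Matrix.mul_one]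

theorem partial_diff_psi_invertible {n : ℕ}
    (X₀ V₀ : Matrix (Fin n) (Fin n) ℝ) (Λ₀ : Fin n → ℝ)
    (U₀ : Matrix (Fin n) (Fin n) ℝ)
    (hV : V₀ᵀ * V₀ = 1 ∧ V₀ * V₀ᵀ = 1) (hU : U₀ᵀ * U₀ = 1 ∧ U₀ * U₀ᵀ = 1)
    (hΛ : ∀ i, 0 ≤ Λ₀ i)
    (hdist : ∀ i j : Fin n, i ≠ j → Λ₀ i ≠ Λ₀ j) :
    (∀ z₁ : Matrix (Fin n) (Fin n) ℝ,
        ∃! ζ : Matrix (Fin n) (Fin n) ℝ × Matrix (Fin n) (Fin n) ℝ × (Fin n → ℝ),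
          fderiv ℝ (psiSVD X₀) (V₀, U₀, Λ₀) ζ = (z₁, 0, 0)) ∧
      ∀ z₁ : Matrix (Fin n) (Fin n) ℝ, ∀ ιV ιU : Matrix (Fin n) (Fin n) ℝ,
        ιVᵀ = -ιV → ιUᵀ = -ιU →
        (∀ i j : Fin n, i ≠ j →
          Λ₀ j * ιV i j - Λ₀ i * ιU i j = -((V₀ᵀ * z₁ * U₀) i j) ∧
          -(Λ₀ i) * ιV i j + Λ₀ j * ιU i j = -((V₀ᵀ * z₁ * U₀) j i)) →
        fderiv ℝ (psiSVD X₀) (V₀, U₀, Λ₀)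
            (V₀ * ιV, U₀ * ιU, fun i => -((V₀ᵀ * z₁ * U₀) i i)) = (z₁, 0, 0) := by
  have hsq : ∀ i j, i ≠ j → Λ₀ i ^ 2 ≠ Λ₀ j ^ 2 := fun i j hij h =>
    hdist i j hij ((sq_eq_sq₀ (hΛ i) (hΛ j)).mp h)
  refine ⟨fun z₁ => ?_, fun z₁ ιV ιU hιV hιU hsys =>
    fderiv_psiSVD_apply_of_skew X₀ hV.1 hU.1 Λ₀ z₁ ιV ιU hιV hιU fun i j hij => (hsys i j hij).1⟩
  obtain ⟨ιV, ιU, hιV, hιU, hsys⟩ := exists_skew_solution_of_sq_ne_sq hsq (V₀ᵀ * z₁ * U₀)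
  have hζ := fderiv_psiSVD_apply_of_skew X₀ hV.1 hU.1 Λ₀ z₁ ιV ιU hιV hιU
    fun i j hij => (hsys i j hij).1
  exact ⟨_, hζ, fun ζ h => fderiv_psiSVD_injective X₀ hV.1 hU.1 hsq (h.trans hζ.symm)⟩
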